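/- Fix a prime p, a matrix B(x) ∈ M_n(𝔽_p(x)), and the additive map Δ: 𝔽_p(x)^n → 𝔽_p(x)^n, F ↦ F' + B(x)·F. Then the p-th iterate Δ^p is 𝔽_p(x)-linear: for all α ∈ 𝔽_p(x) and F ∈ 𝔽_p(x)^n, Δ^p(α·F) = α·Δ^p(F). -/

import Mathlib

/-!
The operator `Δ = d/dx + B` satisfies `Δ (c • F) = c • Δ F + c' • F`, so by induction
`Δ^k (c • F) = ∑ binom(k, i) c⁽ⁱ⁾ • Δ^(k-i) F`. For `k = p` all binomial coefficients but the
outer two vanish mod `p`, leaving `Δ^p (c • F) = c • Δ^p F + c⁽ᵖ⁾ • F`. Finally `c⁽ᵖ⁾ = 0`: the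
same identity for `Δ = d/dx`, applied to `c * denom c`, gives `c⁽ᵖ⁾ * denom c = 0`, because the
`p`-th derivative of a polynomial in characteristic `p` vanishes.
-/

open Polynomial

/-- Formal derivative of a rational function, via the quotient rule on the
canonical numerator/denominator representation. -/
noncomputable def rderiv {F : Type*} [Field F] (f : RatFunc F) : RatFunc F :=
  algebraMap (Polynomial F) (RatFunc F)
      (Polynomial.derivative f.num * f.denom - f.num * Polynomial.derivative f.denom) /
    algebraMap (Polynomial F) (RatFunc F) (f.denom ^ 2)

open Finset

section Leibniz

variable {R M : Type*} [Semiring R] [AddCommMonoid M] [Module R M] (d : R → R) (D : M →+ M)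

theorem iterate_smul_eq_sum_antidiagonal
    (hD : ∀ (c : R) (x : M), D (c • x) = c • D x + d c • x) (k : ℕ) (c : R) (x : M) :
    (⇑D)^[k] (c • x) = ∑ ij ∈ antidiagonal k, k.choose ij.1 • (d^[ij.2] c • (⇑D)^[ij.1] x) := by
  induction k with
  | zero => simp
  | succ k ih =>
    rw [Function.iterate_succ_apply', ih, map_sum, sum_antidiagonal_choose_succ_nsmul
      (fun i j => d^[j] c • (⇑D)^[i] x), add_comm]
    simp only [map_nsmul, hD, smul_add, sum_add_distrib, ← Function.iterate_succ_apply' d,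
      ← Function.iterate_succ_apply' (⇑D)]
    congr 1
    refine sum_congr rfl fun ij hij => ?_
    rw [Nat.choose_symm_of_eq_add (mem_antidiagonal.mp hij).symm]

theorem iterate_char_smul (p : ℕ) [Fact p.Prime] [CharP R p]
    (hD : ∀ (c : R) (x : M), D (c • x) = c • D x + d c • x) (c : R) (x : M) :
    (⇑D)^[p] (c • x) = c • (⇑D)^[p] x + d^[p] c • x := by
  have hp : p.Prime := Fact.out
  rw [iterate_smul_eq_sum_antidiagonal d D hD, sum_eq_add (p, 0) (0, p) (by simp [hp.ne_zero])]
  · simp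
  · rintro ⟨i, j⟩ hmem ⟨hne_p0, hne_0p⟩
    have hij : i + j = p := mem_antidiagonal.mp hmem
    have hchoose : (p.choose i : R) = 0 := (CharP.cast_eq_zero_iff R p _).mpr
      (hp.dvd_choose_self (by grind) (by grind))
    rw [← Nat.cast_smul_eq_nsmul R, hchoose, zero_smul]
  all_goals simp

end Leibniz

theorem Polynomial.iterate_derivative_char_eq_zero {R : Type*} [Semiring R] (p : ℕ)
    [Fact p.Prime] [CharP R p] (q : R[X]) : derivative^[p] q = 0 := by
  ext m
  have hdvd : p ∣ (m + p).descFactorial p :=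
    (Nat.dvd_factorial (Fact.out : p.Prime).pos le_rfl).trans (Nat.factorial_dvd_descFactorial _ _)
  rw [coeff_iterate_derivative, coeff_zero, nsmul_eq_mul,
    (CharP.cast_eq_zero_iff R p _).mpr hdvd, zero_mul]

section RatFunc

variable {K : Type*} [Field K]

local notation "ι" => algebraMap K[X] (RatFunc K)

theorem mul_algebraMap_denom (f : RatFunc K) : f * ι f.denom = ι f.num := by
  nth_rw 1 [← f.num_div_denom]
  exact div_mul_cancel₀ _ (RatFunc.algebraMap_ne_zero f.denom_ne_zero)

/-- `rderiv` is defined through the reduced fraction `num / denom`; the quotient rule holds for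
every representation `f = a / b`. -/
theorem rderiv_mul_sq_of_mul_eq {f : RatFunc K} {a b : K[X]} (h : f * ι b = ι a) :
    rderiv f * ι b ^ 2 = ι (derivative a) * ι b - ι a * ι (derivative b) := by
  have hrel : a * f.denom = f.num * b := RatFunc.algebraMap_injective K <| by
    rw [map_mul, map_mul, ← h, ← mul_algebraMap_denom]; ring
  have hrel' := congrArg derivative hrel
  rw [derivative_mul, derivative_mul] at hrel'
  rw [rderiv, div_mul_eq_mul_div,
    div_eq_iff (RatFunc.algebraMap_ne_zero (pow_ne_zero 2 f.denom_ne_zero))]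
  simp only [← map_mul, ← map_sub, ← map_pow]
  refine congrArg ι ?_
  linear_combination (derivative b * f.denom + b * derivative f.denom) * hrel - (b * f.denom) * hrel'

theorem rderiv_algebraMap (q : K[X]) : rderiv (ι q) = ι (derivative q) := by
  simpa using rderiv_mul_sq_of_mul_eq (f := ι q) (b := 1) (by simp)

theorem iterate_rderiv_algebraMap (k : ℕ) (q : K[X]) :
    rderiv^[k] (ι q) = ι (derivative^[k] q) := by
  induction k generalizing q with
  | zero => rfl
  | succ k ih => rw [Function.iterate_succ_apply, Function.iterate_succ_apply, rderiv_algebraMap, ih]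

theorem rderiv_add (f g : RatFunc K) : rderiv (f + g) = rderiv f + rderiv g := by
  have hb := RatFunc.algebraMap_ne_zero f.denom_ne_zero
  have hd := RatFunc.algebraMap_ne_zero g.denom_ne_zero
  have hf := mul_algebraMap_denom f
  have hg := mul_algebraMap_denom g
  have hfg : (f + g) * ι (f.denom * g.denom) = ι (f.num * g.denom + g.num * f.denom) := by
    rw [map_mul, map_add, map_mul, map_mul, ← hf, ← hg]; ring
  have h1 := rderiv_mul_sq_of_mul_eq hf
  have h2 := rderiv_mul_sq_of_mul_eq hg
  have h3 := rderiv_mul_sq_of_mul_eq hfg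
  simp only [derivative_mul, map_add, map_mul] at h3
  apply mul_right_cancel₀ (mul_ne_zero (pow_ne_zero 2 hb) (pow_ne_zero 2 hd))
  linear_combination h3 - ι g.denom ^ 2 * h1 - ι f.denom ^ 2 * h2

theorem rderiv_mul (f g : RatFunc K) : rderiv (f * g) = rderiv f * g + f * rderiv g := by
  have hb := RatFunc.algebraMap_ne_zero f.denom_ne_zero
  have hd := RatFunc.algebraMap_ne_zero g.denom_ne_zero
  have hf := mul_algebraMap_denom f
  have hg := mul_algebraMap_denom g
  have hfg : (f * g) * ι (f.denom * g.denom) = ι (f.num * g.num) := by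
    rw [map_mul, map_mul, ← hf, ← hg]; ring
  have h1 := rderiv_mul_sq_of_mul_eq hf
  have h2 := rderiv_mul_sq_of_mul_eq hg
  have h3 := rderiv_mul_sq_of_mul_eq hfg
  simp only [derivative_mul, map_add, map_mul] at h3
  apply mul_right_cancel₀ (mul_ne_zero (pow_ne_zero 2 hb) (pow_ne_zero 2 hd))
  linear_combination h3 - g * ι g.denom ^ 2 * h1 - f * ι f.denom ^ 2 * h2
    + ι f.denom * (ι g.num * ι (derivative g.denom) - ι g.denom * ι (derivative g.num)) * hf
    + ι g.denom * (ι f.num * ι (derivative f.denom) - ι f.denom * ι (derivative f.num)) * hg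

noncomputable def rderivAddHom : RatFunc K →+ RatFunc K := AddMonoidHom.mk' rderiv rderiv_add

theorem coe_rderivAddHom : ⇑(rderivAddHom (K := K)) = rderiv := rfl

theorem iterate_rderiv_char_eq_zero (p : ℕ) [Fact p.Prime] [CharP K p] (c : RatFunc K) :
    rderiv^[p] c = 0 := by
  have key := iterate_char_smul rderiv rderivAddHom p
    (fun a x => by simp only [coe_rderivAddHom, smul_eq_mul, rderiv_mul]; ring) c (ι c.denom)
  simp only [coe_rderivAddHom, smul_eq_mul, mul_algebraMap_denom,
    iterate_rderiv_algebraMap, iterate_derivative_char_eq_zero, map_zero, mul_zero,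
    zero_add] at key
  exact (mul_eq_zero.mp key.symm).resolve_right (RatFunc.algebraMap_ne_zero c.denom_ne_zero)

variable {n : Type*} [Fintype n]

noncomputable def connection (B : Matrix n n (RatFunc K)) : (n → RatFunc K) →+ (n → RatFunc K) :=
  AddMonoidHom.mk' (fun G => (fun i => rderiv (G i)) + B.mulVec G) fun G H => by
    ext i
    simp only [Pi.add_apply, rderiv_add, Matrix.mulVec_add]
    ring

theorem connection_smul (B : Matrix n n (RatFunc K)) (c : RatFunc K) (G : n → RatFunc K) :
    connection B (c • G) = c • connection B G + rderiv c • G := by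
  ext i
  simp only [connection, AddMonoidHom.mk'_apply, Pi.add_apply, Pi.smul_apply, Matrix.mulVec_smul,
    smul_eq_mul, rderiv_mul]
  ring

end RatFunc

/-- Let `p` be a prime, `B(x) ∈ Mₙ(𝔽_p(x))`, and `Δ : F ↦ F' + B·F` on `𝔽_p(x)ⁿ`
(which is a priori only `𝔽_p(xᵖ)`-linear).  Then the `p`-th iterate `Δ^p`
(the `p`-curvature) is `𝔽_p(x)`-linear:
`Δ^p(α·F) = α·Δ^p(F)` for all `α ∈ 𝔽_p(x)` and `F ∈ 𝔽_p(x)ⁿ`. -/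
theorem pCurvature_linear (p : ℕ) [Fact p.Prime] (n : ℕ)
    (B : Matrix (Fin n) (Fin n) (RatFunc (ZMod p)))
    (α : RatFunc (ZMod p)) (F : Fin n → RatFunc (ZMod p)) :
    (fun G : Fin n → RatFunc (ZMod p) => (fun i => rderiv (G i)) + B.mulVec G)^[p]
        (α • F) =
      α • (fun G : Fin n → RatFunc (ZMod p) =>
        (fun i => rderiv (G i)) + B.mulVec G)^[p] F := by
  have h := iterate_char_smul rderiv (connection B) p (connection_smul B) α F
  rwa [iterate_rderiv_char_eq_zero, zero_smul, add_zero] at h
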